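/- Let F and G be cyclically symmetric homogeneous polynomials on ℝ^N × ℝ^N of degrees r' and r'' respectively, with seeds f of class D(C_f, σ') and g of class D(C_g, σ''), and let 0 < σ < min(σ', σ''). Then the Poisson bracket H = {F, G} admits a seed h of class D(C_h, σ) with C_h = r' r'' C_f C_g / ((1 − e^{−max(σ',σ'')}) (1 − e^{−max(σ',σ'') + σ})). -/

import Mathlib

open MvPolynomial Finset Real

open scoped Fin.IntCast

/-- index set for the `2N` variables: `inl j` ↦ `x_j`, `inr j` ↦ `y_j` (indices mod `N`). -/
abbrev Idx (N : ℕ) := Fin N ⊕ Fin N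

/-- the cyclic shift `τ^s` (`s ∈ ℤ`) acting on polynomials: `τ^s X_j = X_{j+s}`
(indices mod `N`), separately on the `x` and `y` variables, so that
`(τ^s f)(x,y) = f(τ^s x, τ^s y)`. -/
noncomputable def tauPow (N : ℕ) [NeZero N] (s : ℤ) (f : MvPolynomial (Idx N) ℝ) :
    MvPolynomial (Idx N) ℝ :=
  rename (Sum.map (· + (s : Fin N)) (· + (s : Fin N))) f

/-- `f ↦ f^⊕ := ∑_{l=1}^N τ^l f`. -/
noncomputable def oplus (N : ℕ) [NeZero N] (f : MvPolynomial (Idx N) ℝ) :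
    MvPolynomial (Idx N) ℝ :=
  ∑ l ∈ Finset.range N, tauPow N ((l : ℤ) + 1) f

/-- the polynomial norm `‖f‖_R`; for a homogeneous polynomial of degree `s` it equals
`R^s ∑_{|j|+|k|=s} |f_{j,k}|`. -/
noncomputable def pnorm {N : ℕ} (R : ℝ) (f : MvPolynomial (Idx N) ℝ) : ℝ :=
  ∑ d ∈ f.support, |f.coeff d| * R ^ (d.sum fun _ e => e)

/-- the Poisson bracket `{f,g} = ∑_j (∂f/∂x_j ∂g/∂y_j − ∂f/∂y_j ∂g/∂x_j)`. -/
noncomputable def poisson (N : ℕ) (f g : MvPolynomial (Idx N) ℝ) : MvPolynomial (Idx N) ℝ :=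
  ∑ j : Fin N,
    (pderiv (Sum.inl j) f * pderiv (Sum.inr j) g - pderiv (Sum.inr j) f * pderiv (Sum.inl j) g)

/-- `p` involves only the sites `0,…,m` (it is left aligned with interaction distance `≤ m`). -/
def SuppIn (N : ℕ) (m : ℕ) (p : MvPolynomial (Idx N) ℝ) : Prop :=
  ∀ d ∈ p.support, ∀ j : Fin N, (d (Sum.inl j) ≠ 0 ∨ d (Sum.inr j) ≠ 0) → (j : ℕ) ≤ m

/-- the seed `f` is of class `D(C,σ)`: it decomposes as `f = ∑_{m≥0} f^(m)` with each `f^(m)`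
left aligned, containing only monomials of interaction distance `≤ m`, and
`‖f^(m)‖₁ ≤ C e^{−σ m}`. -/
def ClassD (N : ℕ) (Cf σ : ℝ) (f : MvPolynomial (Idx N) ℝ) : Prop :=
  ∃ (M : ℕ) (comp : ℕ → MvPolynomial (Idx N) ℝ),
    f = ∑ m ∈ Finset.range M, comp m ∧
    (∀ m, M ≤ m → comp m = 0) ∧
    (∀ m, SuppIn N m (comp m)) ∧
    (∀ m, pnorm 1 (comp m) ≤ Cf * Real.exp (-σ * m))

/-!
Write `f = ∑ₘ f⁽ᵐ⁾` and `g = ∑ₘ g⁽ᵐ⁾`, projecting every piece to the degree of `f`, resp. `g`.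
Since the bracket commutes with the shift, `{f^⊕, g^⊕} = ∑_{m', m''} ∑_v {f⁽ᵐ'⁾, τ^v g⁽ᵐ''⁾}^⊕`.
The bracket `{f⁽ᵐ'⁾, τ^v g⁽ᵐ''⁾}` vanishes unless the windows `[0, m']` and `v + [0, m'']` carrying
the two factors meet, and then a shift moves it into `[0, m' + m'']`; shifts change neither `^⊕`
nor the norm. Euler's identity bounds the derivatives of a homogeneous polynomial, so the sum over
`v` costs at most `r' r'' ‖f⁽ᵐ'⁾‖₁ ‖g⁽ᵐ''⁾‖₁`, and the convolution
`∑_{m' + m'' = m} e^{-σ' m' - σ'' m''}` is at most `e^{-σ m} / (1 - e^{-max(σ', σ'') + σ})`.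
-/

open Fin.CommRing in
/-- The windows `[0, m']` and `v + [0, m'']` of `ℤ/N` meet at `s + v`, so one translation moves
both into `[0, m' + m'']`. -/
theorem Fin.exists_add_val_le {N : ℕ} [NeZero N] {m' m'' : ℕ} {s v : Fin N}
    (hs : s.val ≤ m'') (hsv : (s + v).val ≤ m') :
    ∃ k : Fin N, (∀ u : Fin N, u.val ≤ m' → (u + k).val ≤ m' + m'') ∧
      ∀ t : Fin N, t.val ≤ m'' → (t + v + k).val ≤ m' + m'' := by
  have ha : (((s + v).val : ℕ) : Fin N) = s + v := Fin.cast_val_eq_self _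
  have hb : ((s.val : ℕ) : Fin N) = s := Fin.cast_val_eq_self _
  generalize (s + v).val = a at hsv ha
  generalize s.val = b at hs hb
  refine ⟨((b - a : ℕ) : Fin N), fun u hu => ?_, fun t ht => ?_⟩
  · rw [Fin.val_add, Fin.val_natCast]
    have := Nat.mod_le (u.val + (b - a) % N) N
    have := Nat.mod_le (b - a) N
    omega
  · have hab : (a : Fin N) + ((b - a : ℕ) : Fin N) = b + ((a - b : ℕ) : Fin N) := by
      rw [← Nat.cast_add, ← Nat.cast_add]; congr 1; omega
    have key : t + v + ((b - a : ℕ) : Fin N) = ((t.val + (a - b) : ℕ) : Fin N) := by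
      push_cast
      linear_combination hab - ha + hb
    rw [key, Fin.val_natCast]
    have := Nat.mod_le (t.val + (a - b)) N
    omega

theorem Finset.sum_range_add_sum_antidiagonal {M : Type*} [AddCommMonoid M] {A B : ℕ}
    {t : ℕ × ℕ → M} (ht : ∀ p : ℕ × ℕ, A ≤ p.1 ∨ B ≤ p.2 → t p = 0) :
    ∑ m ∈ range (A + B), ∑ p ∈ antidiagonal m, t p = ∑ p ∈ range A ×ˢ range B, t p := by
  rw [← Finset.sum_fiberwise_of_maps_to (g := fun p : ℕ × ℕ => p.1 + p.2) (t := range (A + B))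
    fun p hp => by simp only [mem_product, mem_range] at hp ⊢; omega]
  refine Finset.sum_congr rfl fun m _ =>
    (Finset.sum_subset (fun p hp => ?_) fun p hp hp' => ?_).symm
  · simp only [mem_filter, mem_product, mem_range] at hp
    exact HasAntidiagonal.mem_antidiagonal.2 hp.2
  · simp only [mem_filter, mem_product, mem_range, HasAntidiagonal.mem_antidiagonal] at hp hp'
    exact ht p (by omega)

theorem sum_antidiagonal_exp_le_of_le {σ σ' σ'' : ℝ} (h' : σ ≤ σ') (h'' : σ < σ'') (m : ℕ) :
    ∑ p ∈ antidiagonal m, exp (-σ' * p.1) * exp (-σ'' * p.2) ≤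
      exp (-σ * m) / (1 - exp (-σ'' + σ)) := by
  have hx : exp (-σ'' + σ) < 1 := exp_lt_one_iff.2 (by linarith)
  have hterm : ∀ p ∈ antidiagonal m,
      exp (-σ' * p.1) * exp (-σ'' * p.2) ≤ exp (-σ * m) * exp (-σ'' + σ) ^ p.2 := by
    intro p hp
    rw [← HasAntidiagonal.mem_antidiagonal.1 hp, ← exp_add, ← exp_nat_mul, ← exp_add, exp_le_exp]
    push_cast
    nlinarith [mul_le_mul_of_nonneg_right h' (Nat.cast_nonneg (α := ℝ) p.1)]
  calc ∑ p ∈ antidiagonal m, exp (-σ' * p.1) * exp (-σ'' * p.2)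
      ≤ exp (-σ * m) * ∑ k ∈ range (m + 1), exp (-σ'' + σ) ^ k := by
        refine (Finset.sum_le_sum hterm).trans_eq ?_
        rw [← Finset.mul_sum, ← Finset.Nat.sum_antidiagonal_swap,
          Finset.Nat.sum_antidiagonal_eq_sum_range_succ_mk]
        rfl
    _ ≤ exp (-σ * m) * (1 / (1 - exp (-σ'' + σ))) := by
        gcongr
        simpa [← Finset.range_eq_Ico] using geom_sum_Ico_le_of_lt_one (m := 0) (exp_pos _).le hx
    _ = exp (-σ * m) / (1 - exp (-σ'' + σ)) := mul_one_div _ _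

theorem sum_antidiagonal_exp_le {σ σ' σ'' : ℝ} (hσ : 0 < σ) (h' : σ < σ') (h'' : σ < σ'')
    (m : ℕ) :
    ∑ p ∈ antidiagonal m, exp (-σ' * p.1) * exp (-σ'' * p.2) ≤
      exp (-σ * m) / ((1 - exp (-max σ' σ'')) * (1 - exp (-max σ' σ'' + σ))) := by
  have hsharp : ∑ p ∈ antidiagonal m, exp (-σ' * p.1) * exp (-σ'' * p.2) ≤
      exp (-σ * m) / (1 - exp (-max σ' σ'' + σ)) := by
    rcases le_total σ' σ'' with h | h
    · rw [max_eq_right h]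
      exact sum_antidiagonal_exp_le_of_le h'.le h'' m
    · rw [max_eq_left h, ← Finset.Nat.sum_antidiagonal_swap]
      simpa only [Prod.fst_swap, Prod.snd_swap, mul_comm] using
        sum_antidiagonal_exp_le_of_le h''.le h' m
  have hμ : σ < max σ' σ'' := lt_max_of_lt_left h'
  have hd : 0 < 1 - exp (-max σ' σ'' + σ) := sub_pos.2 (exp_lt_one_iff.2 (by linarith))
  refine hsharp.trans (div_le_div_of_nonneg_left (exp_pos _).le
    (mul_pos (sub_pos.2 (exp_lt_one_iff.2 (by linarith))) hd)
    (mul_le_of_le_one_left hd.le (sub_le_self _ (exp_pos _).le)))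

namespace Idx

variable {N : ℕ}

def site : Idx N → Fin N := Sum.elim id id

def shift (v : Fin N) : Idx N → Idx N := Sum.map (· + v) (· + v)

theorem shift_injective (v : Fin N) : Function.Injective (shift v) :=
  Sum.map_injective.2 ⟨add_left_injective v, add_left_injective v⟩

theorem shift_comp_shift (a b : Fin N) : shift a ∘ shift b = shift (N := N) (a + b) := by
  funext i
  cases i <;> simp [shift, add_assoc, add_comm b a]

theorem shift_zero [NeZero N] : shift (0 : Fin N) = id := by
  funext i
  cases i <;> simp [shift]

theorem site_shift (v : Fin N) (i : Idx N) : site (shift v i) = site i + v := by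
  cases i <;> rfl

end Idx

namespace CyclicSeed

variable {N : ℕ}

local notation "P" => MvPolynomial (Idx N) ℝ

section Shift

noncomputable def shift (v : Fin N) : P →ₐ[ℝ] P := rename (Idx.shift v)

theorem shift_shift (a b : Fin N) (p : P) : shift a (shift b p) = shift (a + b) p := by
  simp only [shift, rename_rename, Idx.shift_comp_shift]

theorem poisson_sum_left {ι : Type*} (s : Finset ι) (a : ι → P) (b : P) :
    poisson N (∑ i ∈ s, a i) b = ∑ i ∈ s, poisson N (a i) b := by
  simp only [poisson, map_sum, Finset.sum_mul, Finset.sum_sub_distrib]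
  congr 1 <;> exact Finset.sum_comm

theorem poisson_sum_right {ι : Type*} (s : Finset ι) (a : P) (b : ι → P) :
    poisson N a (∑ i ∈ s, b i) = ∑ i ∈ s, poisson N a (b i) := by
  simp only [poisson, map_sum, Finset.mul_sum, Finset.sum_sub_distrib]
  congr 1 <;> exact Finset.sum_comm

theorem poisson_zero_left (b : P) : poisson N 0 b = 0 := by simp [poisson]

theorem poisson_zero_right (a : P) : poisson N a 0 = 0 := by simp [poisson]

variable [NeZero N]

theorem tauPow_eq_shift (s : ℤ) (p : P) : tauPow N s p = shift (s : Fin N) p := rfl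

theorem oplus_eq_sum_shift (p : P) : oplus N p = ∑ v : Fin N, shift v p := by
  rw [oplus, ← Fin.sum_univ_eq_sum_range (fun l => tauPow N ((l : ℤ) + 1) p) N]
  refine Fintype.sum_equiv (Equiv.addRight 1) _ _ fun v => ?_
  rw [tauPow_eq_shift]
  congr 2
  rw [Fin.intCast_def', if_pos (by omega)]
  ext
  simp [Fin.val_add, Int.natAbs_add_of_nonneg]

theorem oplus_shift (k : Fin N) (p : P) : oplus N (shift k p) = oplus N p := by
  simp only [oplus_eq_sum_shift, shift_shift]
  exact Fintype.sum_equiv (Equiv.addRight k) _ _ fun v => rfl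

theorem oplus_sum {ι : Type*} (s : Finset ι) (p : ι → P) :
    oplus N (∑ i ∈ s, p i) = ∑ i ∈ s, oplus N (p i) := by
  simp only [oplus_eq_sum_shift, map_sum]
  exact Finset.sum_comm

theorem oplus_zero : oplus N (0 : P) = 0 := by
  simp [oplus_eq_sum_shift]

theorem poisson_shift (v : Fin N) (a b : P) :
    poisson N (shift v a) (shift v b) = shift v (poisson N a b) := by
  have hd : ∀ (i : Idx N) (p : P), pderiv (Idx.shift v i) (shift v p) = shift v (pderiv i p) :=
    fun i p => pderiv_rename (Idx.shift_injective v) i p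
  rw [poisson, poisson, map_sum]
  refine (Fintype.sum_equiv (Equiv.addRight v) _ _ fun j => ?_).symm
  simp only [map_sub, map_mul, ← hd]
  rfl

theorem poisson_oplus_oplus (a b : P) :
    poisson N (oplus N a) (oplus N b) = ∑ v : Fin N, oplus N (poisson N a (shift v b)) := by
  have hinner : ∀ t : Fin N, ∑ u : Fin N, poisson N (shift t a) (shift u b) =
      ∑ v : Fin N, shift t (poisson N a (shift v b)) := fun t =>
    (Fintype.sum_equiv (Equiv.addLeft t) _ _ fun v => by
      rw [← poisson_shift, shift_shift, Equiv.coe_addLeft]).symm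
  simp only [oplus_eq_sum_shift, poisson_sum_left, poisson_sum_right]
  rw [Finset.sum_comm, Finset.sum_congr rfl fun t _ => hinner t, Finset.sum_comm]

theorem pderiv_shift (v : Fin N) (i : Idx N) (p : P) :
    pderiv i (shift v p) = shift v (pderiv (Idx.shift (-v) i) p) := by
  have h := pderiv_rename (Idx.shift_injective v) (Idx.shift (-v) i) p
  rwa [← Function.comp_apply (f := Idx.shift v), Idx.shift_comp_shift, add_neg_cancel,
    Idx.shift_zero, id] at h

end Shift

section Norm

theorem pnorm_one_eq (p : P) : pnorm 1 p = ∑ d ∈ p.support, |p.coeff d| := by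
  simp [pnorm]

theorem pnorm_one_nonneg (p : P) : 0 ≤ pnorm 1 p := by
  rw [pnorm_one_eq]
  exact Finset.sum_nonneg fun d _ => abs_nonneg _

theorem pnorm_one_eq_of_support_subset {p : P} {A : Finset (Idx N →₀ ℕ)} (h : p.support ⊆ A) :
    pnorm 1 p = ∑ d ∈ A, |p.coeff d| := by
  rw [pnorm_one_eq]
  exact Finset.sum_subset h fun d _ hd => by rw [notMem_support_iff.mp hd, abs_zero]

theorem pnorm_one_add_le (p q : P) : pnorm 1 (p + q) ≤ pnorm 1 p + pnorm 1 q := by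
  classical
  rw [pnorm_one_eq_of_support_subset support_add,
    pnorm_one_eq_of_support_subset (Finset.subset_union_left (s₂ := q.support)),
    pnorm_one_eq_of_support_subset (Finset.subset_union_right (s₁ := p.support)),
    ← Finset.sum_add_distrib]
  exact Finset.sum_le_sum fun d _ => by rw [coeff_add]; exact abs_add_le _ _

theorem pnorm_one_sum_le {ι : Type*} (s : Finset ι) (p : ι → P) :
    pnorm 1 (∑ i ∈ s, p i) ≤ ∑ i ∈ s, pnorm 1 (p i) :=
  Finset.le_sum_of_subadditive _ (by simp [pnorm]) pnorm_one_add_le s p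

theorem pnorm_one_neg (p : P) : pnorm 1 (-p) = pnorm 1 p := by
  simp [pnorm_one_eq, support_neg]

theorem pnorm_one_sub_le (p q : P) : pnorm 1 (p - q) ≤ pnorm 1 p + pnorm 1 q := by
  simpa only [sub_eq_add_neg, pnorm_one_neg] using pnorm_one_add_le p (-q)

theorem pnorm_one_monomial (d : Idx N →₀ ℕ) (c : ℝ) : pnorm 1 (monomial d c) = |c| := by
  classical
  rcases eq_or_ne c 0 with rfl | hc
  · simp [pnorm_one_eq]
  · simp [pnorm_one_eq, support_monomial, hc]

theorem pnorm_one_mul_le (p q : P) : pnorm 1 (p * q) ≤ pnorm 1 p * pnorm 1 q := by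
  conv_lhs => rw [p.as_sum, q.as_sum, Finset.sum_mul_sum]
  refine (pnorm_one_sum_le _ _).trans ?_
  rw [pnorm_one_eq, pnorm_one_eq, Finset.sum_mul_sum]
  refine Finset.sum_le_sum fun d _ => ?_
  refine (pnorm_one_sum_le _ _).trans (Finset.sum_le_sum fun e _ => ?_)
  rw [monomial_mul, pnorm_one_monomial, abs_mul]

theorem pnorm_one_rename {f : Idx N → Idx N} (hf : Function.Injective f) (p : P) :
    pnorm 1 (rename f p) = pnorm 1 p := by
  classical
  rw [pnorm_one_eq, pnorm_one_eq, support_rename_of_injective hf,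
    Finset.sum_image fun a _ b _ h => Finsupp.mapDomain_injective hf h]
  exact Finset.sum_congr rfl fun d _ => by rw [coeff_rename_mapDomain _ hf]

theorem pnorm_one_homogeneousComponent_le (r : ℕ) (p : P) :
    pnorm 1 (homogeneousComponent r p) ≤ pnorm 1 p := by
  rw [pnorm_one_eq, pnorm_one_eq, support_homogeneousComponent]
  refine (Finset.sum_le_sum fun d _ => ?_).trans
    (Finset.sum_le_sum_of_subset_of_nonneg (Finset.filter_subset _ _) fun d _ _ => abs_nonneg _)
  rw [coeff_homogeneousComponent]
  split_ifs <;> simp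

theorem pderiv_eq_sum (i : Idx N) (p : P) :
    pderiv i p = ∑ d ∈ p.support, monomial (d - Finsupp.single i 1) (p.coeff d * d i) := by
  conv_lhs => rw [p.as_sum]
  rw [map_sum]
  exact Finset.sum_congr rfl fun d _ => pderiv_monomial

theorem sum_pnorm_one_pderiv_le {p : P} {r : ℕ} (hp : p.IsHomogeneous r) :
    ∑ i : Idx N, pnorm 1 (pderiv i p) ≤ r * pnorm 1 p := by
  have hi : ∀ i : Idx N, pnorm 1 (pderiv i p) ≤ ∑ d ∈ p.support, |p.coeff d| * d i := fun i => by
    rw [pderiv_eq_sum]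
    refine (pnorm_one_sum_le _ _).trans (Finset.sum_le_sum fun d _ => ?_)
    rw [pnorm_one_monomial, abs_mul, Nat.abs_cast]
  refine (Finset.sum_le_sum fun i _ => hi i).trans ?_
  rw [Finset.sum_comm, pnorm_one_eq, Finset.mul_sum]
  refine Finset.sum_le_sum fun d hd => le_of_eq ?_
  have hdeg : ∑ i : Idx N, (d i : ℝ) = r := by
    rw [← hp (mem_support_iff.mp hd)]
    simp [Finsupp.weight_apply, Finsupp.sum_fintype]
  rw [← Finset.mul_sum, hdeg, mul_comm]

theorem pnorm_one_poisson_shift_le [NeZero N] (a b : P) (v : Fin N) :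
    pnorm 1 (poisson N a (shift v b)) ≤ ∑ j : Fin N,
      (pnorm 1 (pderiv (.inl j) a) * pnorm 1 (pderiv (.inr (j - v)) b) +
        pnorm 1 (pderiv (.inr j) a) * pnorm 1 (pderiv (.inl (j - v)) b)) := by
  refine (pnorm_one_sum_le _ _).trans (Finset.sum_le_sum fun j _ => ?_)
  refine (pnorm_one_sub_le _ _).trans (add_le_add ?_ ?_) <;>
  · refine (pnorm_one_mul_le _ _).trans_eq ?_
    rw [pderiv_shift, shift, pnorm_one_rename (Idx.shift_injective v), sub_eq_add_neg]
    rfl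

theorem sum_pnorm_one_poisson_shift_le [NeZero N] {a b : P} {ra rb : ℕ}
    (ha : a.IsHomogeneous ra) (hb : b.IsHomogeneous rb) :
    ∑ v : Fin N, pnorm 1 (poisson N a (shift v b)) ≤ ra * rb * (pnorm 1 a * pnorm 1 b) := by
  set A : Idx N → ℝ := fun i => pnorm 1 (pderiv i a)
  set B : Idx N → ℝ := fun i => pnorm 1 (pderiv i b)
  have hterm : ∀ v : Fin N, pnorm 1 (poisson N a (shift v b)) ≤
      ∑ j : Fin N, (A (.inl j) * B (.inr (j - v)) + A (.inr j) * B (.inl (j - v))) :=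
    pnorm_one_poisson_shift_le a b
  have hx : ∀ j, ∑ v, B (.inl (j - v)) = ∑ w, B (.inl w) := fun j =>
    Fintype.sum_equiv (Equiv.subLeft j) _ _ fun v => rfl
  have hy : ∀ j, ∑ v, B (.inr (j - v)) = ∑ w, B (.inr w) := fun j =>
    Fintype.sum_equiv (Equiv.subLeft j) _ _ fun v => rfl
  have hA := sum_pnorm_one_pderiv_le ha
  have hB := sum_pnorm_one_pderiv_le hb
  rw [Fintype.sum_sum_type] at hA hB
  have hAx : 0 ≤ ∑ j, A (.inl j) := Finset.sum_nonneg fun j _ => pnorm_one_nonneg _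
  have hAy : 0 ≤ ∑ j, A (.inr j) := Finset.sum_nonneg fun j _ => pnorm_one_nonneg _
  have hBx : 0 ≤ ∑ j, B (.inl j) := Finset.sum_nonneg fun j _ => pnorm_one_nonneg _
  have hBy : 0 ≤ ∑ j, B (.inr j) := Finset.sum_nonneg fun j _ => pnorm_one_nonneg _
  calc ∑ v : Fin N, pnorm 1 (poisson N a (shift v b))
      ≤ (∑ j, A (.inl j)) * ∑ w, B (.inr w) + (∑ j, A (.inr j)) * ∑ w, B (.inl w) := by
        refine (Finset.sum_le_sum fun v _ => hterm v).trans_eq ?_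
        rw [Finset.sum_comm]
        simp only [Finset.sum_add_distrib, ← Finset.mul_sum, hx, hy, Finset.sum_mul]
    _ ≤ (∑ j, A (.inl j) + ∑ j, A (.inr j)) * (∑ j, B (.inl j) + ∑ j, B (.inr j)) := by
        nlinarith [mul_nonneg hAx hBx, mul_nonneg hAy hBy]
    _ ≤ (ra * pnorm 1 a) * (rb * pnorm 1 b) :=
        mul_le_mul hA hB (add_nonneg hBx hBy) ((add_nonneg hAx hAy).trans hA)
    _ = ra * rb * (pnorm 1 a * pnorm 1 b) := by ring

end Norm

section Support

theorem suppIn_iff_vars {m : ℕ} {p : P} :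
    SuppIn N m p ↔ ∀ i ∈ p.vars, (Idx.site i).val ≤ m := by
  simp only [SuppIn, mem_vars_iff_mem_support, Finsupp.mem_support_iff]
  constructor
  · rintro h (j | j) ⟨d, hd, hj⟩
    exacts [h d hd j (.inl hj), h d hd j (.inr hj)]
  · rintro h d hd j (hj | hj)
    exacts [h (.inl j) ⟨d, hd, hj⟩, h (.inr j) ⟨d, hd, hj⟩]

theorem suppIn_zero (m : ℕ) : SuppIn N m 0 := fun d hd => by simp at hd

theorem suppIn_sum {ι : Type*} {m : ℕ} {s : Finset ι} {p : ι → P}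
    (h : ∀ i ∈ s, SuppIn N m (p i)) : SuppIn N m (∑ i ∈ s, p i) := by
  classical
  rw [suppIn_iff_vars]
  intro i hi
  obtain ⟨x, hx, hix⟩ := Finset.mem_biUnion.1 (vars_sum_subset s p hi)
  exact suppIn_iff_vars.1 (h x hx) i hix

theorem suppIn_shift {m : ℕ} {k : Fin N} {p : P}
    (h : ∀ i ∈ p.vars, (Idx.site i + k).val ≤ m) : SuppIn N m (shift k p) := by
  rw [suppIn_iff_vars]
  intro i hi
  obtain ⟨i₀, hi₀, rfl⟩ := mem_vars_rename _ _ hi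
  rw [Idx.site_shift]
  exact h i₀ hi₀

theorem vars_pderiv_subset (i : Idx N) (p : P) : (pderiv i p).vars ⊆ p.vars := by
  classical
  rw [pderiv_eq_sum]
  refine (vars_sum_subset _ _).trans (Finset.biUnion_subset.2 fun d hd x hx => ?_)
  obtain ⟨e, he, hxe⟩ := (mem_vars_iff_mem_support x).1 hx
  obtain rfl := Finset.mem_singleton.1 (support_monomial_subset he)
  refine (mem_vars_iff_mem_support x).2 ⟨d, hd, ?_⟩
  rw [Finsupp.mem_support_iff] at hxe ⊢
  exact fun h0 => hxe (by simp [h0])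

theorem vars_poisson_subset (a b : P) : (poisson N a b).vars ⊆ a.vars ∪ b.vars := by
  classical
  refine (vars_sum_subset _ _).trans (Finset.biUnion_subset.2 fun j _ => ?_)
  refine (vars_sub_subset _).trans (Finset.union_subset ?_ ?_) <;>
  · exact (vars_mul _ _).trans (Finset.union_subset_union (vars_pderiv_subset _ _)
      (vars_pderiv_subset _ _))

theorem exists_site_eq_of_poisson_ne_zero {a b : P} (h : poisson N a b ≠ 0) :
    ∃ i ∈ a.vars, ∃ i' ∈ b.vars, Idx.site i = Idx.site i' := by
  by_contra! hc
  refine h (Finset.sum_eq_zero fun j _ => ?_)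
  by_cases hj : Sum.inl j ∈ a.vars ∨ Sum.inr j ∈ a.vars
  · have hb : Sum.inl j ∉ b.vars ∧ Sum.inr j ∉ b.vars := by
      rcases hj with hj | hj <;> exact ⟨fun hb => hc _ hj _ hb rfl, fun hb => hc _ hj _ hb rfl⟩
    simp [pderiv_eq_zero_of_notMem_vars hb.1, pderiv_eq_zero_of_notMem_vars hb.2]
  · rw [not_or] at hj
    simp [pderiv_eq_zero_of_notMem_vars hj.1, pderiv_eq_zero_of_notMem_vars hj.2]

theorem exists_suppIn_shift_poisson [NeZero N] {m' m'' : ℕ} {a b : P} (ha : SuppIn N m' a)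
    (hb : SuppIn N m'' b) (v : Fin N) :
    ∃ k : Fin N, SuppIn N (m' + m'') (shift k (poisson N a (shift v b))) := by
  by_cases hq : poisson N a (shift v b) = 0
  · exact ⟨0, by rw [hq, map_zero]; exact suppIn_zero _⟩
  obtain ⟨i, hi, i', hi', hsite⟩ := exists_site_eq_of_poisson_ne_zero hq
  obtain ⟨i₀, hi₀, rfl⟩ := mem_vars_rename _ _ hi'
  rw [Idx.site_shift] at hsite
  obtain ⟨k, hka, hkb⟩ := Fin.exists_add_val_le (suppIn_iff_vars.1 hb _ hi₀)
    (hsite ▸ suppIn_iff_vars.1 ha _ hi)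
  refine ⟨k, suppIn_shift fun i hi => ?_⟩
  rcases Finset.mem_union.1 (vars_poisson_subset _ _ hi) with hi | hi
  · exact hka _ (suppIn_iff_vars.1 ha _ hi)
  · obtain ⟨i₀, hi₀, rfl⟩ := mem_vars_rename _ _ hi
    rw [Idx.site_shift]
    exact hkb _ (suppIn_iff_vars.1 hb _ hi₀)

end Support

section BracketSeed

open Classical in
noncomputable def leftAlign (m : ℕ) (q : P) : P :=
  if h : ∃ k : Fin N, SuppIn N m (shift k q) then shift h.choose q else q

theorem suppIn_leftAlign {m : ℕ} {q : P} (h : ∃ k : Fin N, SuppIn N m (shift k q)) :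
    SuppIn N m (leftAlign m q) := by
  rw [leftAlign, dif_pos h]
  exact h.choose_spec

theorem leftAlign_zero (m : ℕ) : leftAlign m (0 : P) = 0 := by
  unfold leftAlign
  split_ifs <;> simp

theorem pnorm_one_leftAlign (m : ℕ) (q : P) : pnorm 1 (leftAlign m q) = pnorm 1 q := by
  unfold leftAlign
  split_ifs
  exacts [pnorm_one_rename (Idx.shift_injective _) q, rfl]

theorem oplus_leftAlign [NeZero N] (m : ℕ) (q : P) : oplus N (leftAlign m q) = oplus N q := by
  unfold leftAlign
  split_ifs
  exacts [oplus_shift _ q, rfl]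

noncomputable def bracketSeed (F G : ℕ → P) (m : ℕ) : P :=
  ∑ p ∈ antidiagonal m, ∑ v : Fin N, leftAlign m (poisson N (F p.1) (shift v (G p.2)))

variable {F G : ℕ → MvPolynomial (Idx N) ℝ}

theorem bracketSeed_eq_zero {A B m : ℕ} (hF : ∀ a, A ≤ a → F a = 0) (hG : ∀ b, B ≤ b → G b = 0)
    (hm : A + B ≤ m) : bracketSeed F G m = 0 := by
  refine Finset.sum_eq_zero fun p hp => Finset.sum_eq_zero fun v _ => ?_
  have := HasAntidiagonal.mem_antidiagonal.1 hp
  rcases (by omega : A ≤ p.1 ∨ B ≤ p.2) with h | h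
  · rw [hF _ h, poisson_zero_left, leftAlign_zero]
  · rw [hG _ h, map_zero, poisson_zero_right, leftAlign_zero]

variable [NeZero N]

theorem oplus_sum_bracketSeed {A B : ℕ} (hF : ∀ a, A ≤ a → F a = 0)
    (hG : ∀ b, B ≤ b → G b = 0) :
    oplus N (∑ m ∈ range (A + B), bracketSeed F G m) =
      poisson N (oplus N (∑ a ∈ range A, F a)) (oplus N (∑ b ∈ range B, G b)) := by
  simp only [bracketSeed, oplus_sum, oplus_leftAlign]
  rw [Finset.sum_range_add_sum_antidiagonal, Finset.sum_product, poisson_sum_left]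
  · refine Finset.sum_congr rfl fun a _ => ?_
    rw [poisson_sum_right]
    simp only [poisson_oplus_oplus]
  · rintro p (h | h)
    · simp [hF _ h, poisson_zero_left, oplus_zero]
    · simp [hG _ h, poisson_zero_right, oplus_zero]

theorem suppIn_bracketSeed (hF : ∀ m, SuppIn N m (F m)) (hG : ∀ m, SuppIn N m (G m)) (m : ℕ) :
    SuppIn N m (bracketSeed F G m) :=
  suppIn_sum fun p hp => suppIn_sum fun v _ => suppIn_leftAlign <|
    HasAntidiagonal.mem_antidiagonal.1 hp ▸ exists_suppIn_shift_poisson (hF p.1) (hG p.2) v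

theorem pnorm_one_bracketSeed_le {ra rb : ℕ} (hF : ∀ m, (F m).IsHomogeneous ra)
    (hG : ∀ m, (G m).IsHomogeneous rb) (m : ℕ) :
    pnorm 1 (bracketSeed F G m) ≤
      ra * rb * ∑ p ∈ antidiagonal m, pnorm 1 (F p.1) * pnorm 1 (G p.2) := by
  rw [Finset.mul_sum]
  refine (pnorm_one_sum_le _ _).trans (Finset.sum_le_sum fun p _ => ?_)
  refine (pnorm_one_sum_le _ _).trans ?_
  simp only [pnorm_one_leftAlign]
  exact sum_pnorm_one_poisson_shift_le (hF p.1) (hG p.2)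

theorem pnorm_one_bracketSeed_le_exp {ra rb : ℕ} {Cf Cg σ' σ'' σ : ℝ}
    (hFh : ∀ m, (F m).IsHomogeneous ra) (hGh : ∀ m, (G m).IsHomogeneous rb)
    (hF : ∀ m, pnorm 1 (F m) ≤ Cf * exp (-σ' * m)) (hG : ∀ m, pnorm 1 (G m) ≤ Cg * exp (-σ'' * m))
    (hσ : 0 < σ) (h' : σ < σ') (h'' : σ < σ'') (m : ℕ) :
    pnorm 1 (bracketSeed F G m) ≤ ra * rb * Cf * Cg /
      ((1 - exp (-max σ' σ'')) * (1 - exp (-max σ' σ'' + σ))) * exp (-σ * m) := by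
  have hCf : 0 ≤ Cf := nonneg_of_mul_nonneg_left ((pnorm_one_nonneg _).trans (hF 0)) (exp_pos _)
  have hCg : 0 ≤ Cg := nonneg_of_mul_nonneg_left ((pnorm_one_nonneg _).trans (hG 0)) (exp_pos _)
  calc pnorm 1 (bracketSeed F G m)
      ≤ ra * rb * ∑ p ∈ antidiagonal m, pnorm 1 (F p.1) * pnorm 1 (G p.2) :=
        pnorm_one_bracketSeed_le hFh hGh m
    _ ≤ ra * rb * ∑ p ∈ antidiagonal m, Cf * exp (-σ' * p.1) * (Cg * exp (-σ'' * p.2)) := by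
        gcongr with p
        exacts [pnorm_one_nonneg _, hF _, hG _]
    _ = ra * rb * Cf * Cg * ∑ p ∈ antidiagonal m, exp (-σ' * p.1) * exp (-σ'' * p.2) := by
        simp only [Finset.mul_sum]
        exact Finset.sum_congr rfl fun p _ => by ring
    _ ≤ ra * rb * Cf * Cg * (exp (-σ * m) /
          ((1 - exp (-max σ' σ'')) * (1 - exp (-max σ' σ'' + σ)))) := by
        gcongr
        exact sum_antidiagonal_exp_le hσ h' h'' m
    _ = _ := by ring

end BracketSeed

end CyclicSeed

theorem ClassD.exists_homogeneous {N r : ℕ} {C σ : ℝ} {f : MvPolynomial (Idx N) ℝ}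
    (hD : ClassD N C σ f) (hf : f.IsHomogeneous r) :
    ∃ (M : ℕ) (F : ℕ → MvPolynomial (Idx N) ℝ), f = ∑ m ∈ range M, F m ∧
      (∀ m, M ≤ m → F m = 0) ∧ (∀ m, SuppIn N m (F m)) ∧
      (∀ m, pnorm 1 (F m) ≤ C * exp (-σ * m)) ∧ ∀ m, (F m).IsHomogeneous r := by
  obtain ⟨M, comp, hsum, h0, hsupp, hnorm⟩ := hD
  refine ⟨M, fun m => homogeneousComponent r (comp m), ?_, fun m hm => ?_, fun m d hd => ?_,
    fun m => (CyclicSeed.pnorm_one_homogeneousComponent_le r _).trans (hnorm m),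
    fun m => homogeneousComponent_isHomogeneous _ _⟩
  · rw [← homogeneousComponent_eq_self hf, hsum, map_sum]
  · simp only [h0 m hm, map_zero]
  · rw [support_homogeneousComponent] at hd
    exact hsupp m d (Finset.mem_filter.1 hd).1

open CyclicSeed in
theorem poisson_classD_general (N : ℕ) [NeZero N]
    (r' r'' : ℕ) (f g : MvPolynomial (Idx N) ℝ)
    (hf : f.IsHomogeneous r') (hg : g.IsHomogeneous r'')
    (Cf Cg σ' σ'' σ : ℝ)
    (hfD : ClassD N Cf σ' f) (hgD : ClassD N Cg σ'' g)
    (hσ : 0 < σ) (hσlt : σ < min σ' σ'') :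
    ∃ h : MvPolynomial (Idx N) ℝ,
      oplus N h = poisson N (oplus N f) (oplus N g) ∧
      ClassD N
        (r' * r'' * Cf * Cg /
          ((1 - Real.exp (-max σ' σ'')) * (1 - Real.exp (-max σ' σ'' + σ)))) σ h := by
  obtain ⟨h', h''⟩ := lt_min_iff.1 hσlt
  obtain ⟨Mf, F, rfl, hF0, hFs, hFn, hFh⟩ := hfD.exists_homogeneous hf
  obtain ⟨Mg, G, rfl, hG0, hGs, hGn, hGh⟩ := hgD.exists_homogeneous hg
  exact ⟨∑ m ∈ range (Mf + Mg), bracketSeed F G m, oplus_sum_bracketSeed hF0 hG0,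
    Mf + Mg, bracketSeed F G, rfl, fun m => bracketSeed_eq_zero hF0 hG0,
    suppIn_bracketSeed hFs hGs, pnorm_one_bracketSeed_le_exp hFh hGh hFn hGn hσ h' h''⟩

/-- Let `F = f^⊕`, `G = g^⊕` be cyclically symmetric homogeneous
polynomials of degrees `r', r''` with seeds `f ∈ D(C_f,σ')`, `g ∈ D(C_g,σ'')`, and let
`0 < σ < min(σ',σ'')`.  Then `{F,G}` admits a seed `h` of class `D(C_h, σ)` with
`C_h = r' r'' C_f C_g / ((1−e^{−max(σ',σ'')})(1−e^{−max(σ',σ'')+σ}))`. -/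
theorem poisson_classD (N : ℕ) [NeZero N]
    (r' r'' : ℕ) (f g : MvPolynomial (Idx N) ℝ)
    (hf : f.IsHomogeneous r') (hg : g.IsHomogeneous r'')
    (Cf Cg σ' σ'' σ : ℝ) (hCf : 0 < Cf) (hCg : 0 < Cg)
    (hσ' : 0 < σ') (hσ'' : 0 < σ'')
    (hfD : ClassD N Cf σ' f) (hgD : ClassD N Cg σ'' g)
    (hσ : 0 < σ) (hσlt : σ < min σ' σ'') :
    ∃ h : MvPolynomial (Idx N) ℝ,
      oplus N h = poisson N (oplus N f) (oplus N g) ∧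
      ClassD N
        (r' * r'' * Cf * Cg /
          ((1 - Real.exp (-max σ' σ'')) * (1 - Real.exp (-max σ' σ'' + σ)))) σ h :=
  poisson_classD_general N r' r'' f g hf hg Cf Cg σ' σ'' σ hfD hgD hσ hσlt
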